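/- For all m ≥ 1 and n ≥ 1, the complete bipartite graph K_{m,n} is a veto interval graph; in particular, assigning m copies of the veto interval (0,2,4) to one part and n copies of (3,5,7) to the other gives a valid veto interval representation. -/
import Mathlib


/-- A veto interval: a closed interval `[l, r]` with a veto mark `v`, `l < v < r`. -/
structure VetoInterval where
  l : ℝ
  v : ℝ
  r : ℝ
  hlv : l < v
  hvr : v < r

/-- Two veto intervals are adjacent iff they intersect and neither contains
the veto mark of the other. -/
def VIAdj (a b : VetoInterval) : Prop :=
  (a.v < b.l ∧ b.l < a.r ∧ a.r < b.v) ∨ (b.v < a.l ∧ a.l < b.r ∧ b.r < a.v)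

/-- `G` is a veto interval graph. -/
def IsVIGraph {V : Type*} (G : SimpleGraph V) : Prop :=
  ∃ f : V → VetoInterval, ∀ a b : V, G.Adj a b ↔ VIAdj (f a) (f b)

/-- For `m, n ≥ 1`, the complete bipartite graph `K_{m,n}` is a veto interval
graph; in particular, assigning `m` copies of `(0,2,4)` to one part and `n`
copies of `(3,5,7)` to the other is a valid veto interval representation. -/
theorem stmt_4 (m n : ℕ) (hm : 1 ≤ m) (hn : 1 ≤ n) :
    (∀ a b : Fin m ⊕ Fin n,
      (completeBipartiteGraph (Fin m) (Fin n)).Adj a b ↔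
        VIAdj (Sum.elim (fun _ => (⟨0, 2, 4, by norm_num, by norm_num⟩ : VetoInterval))
                        (fun _ => (⟨3, 5, 7, by norm_num, by norm_num⟩ : VetoInterval)) a)
              (Sum.elim (fun _ => (⟨0, 2, 4, by norm_num, by norm_num⟩ : VetoInterval))
                        (fun _ => (⟨3, 5, 7, by norm_num, by norm_num⟩ : VetoInterval)) b))
    ∧ IsVIGraph (completeBipartiteGraph (Fin m) (Fin n)) := by
  have key : ∀ a b : Fin m ⊕ Fin n,
      (completeBipartiteGraph (Fin m) (Fin n)).Adj a b ↔
        VIAdj (Sum.elim (fun _ => (⟨0, 2, 4, by norm_num, by norm_num⟩ : VetoInterval))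
                        (fun _ => (⟨3, 5, 7, by norm_num, by norm_num⟩ : VetoInterval)) a)
              (Sum.elim (fun _ => (⟨0, 2, 4, by norm_num, by norm_num⟩ : VetoInterval))
                        (fun _ => (⟨3, 5, 7, by norm_num, by norm_num⟩ : VetoInterval)) b) := by
    rintro (a | a) (b | b) <;> simp [VIAdj] <;> norm_num
  exact ⟨key, _, key⟩
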